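/- Suppose u ∈ 2^{<ω} is placed with witness t (i.e., N_u ∩ K_t ≠ ∅, (|u|−1)₀ = Σ^t_{|t|}, and u(|u|−1) = 1 if (|u|−1)₁ > 0). Then Σ_t := ⟨Σ^t_{|t|},0⟩ < |u|, for each k < |t| the last 1 occurring in u strictly before position ⟨Σ^t_{k+1},0⟩ is at position ⟨Σ^t_k, t(k)+1⟩, and the witness t is unique. -/

import Mathlib

/-- Triangular numbers. -/
def tri (m : ℕ) : ℕ := m * (m + 1) / 2

/-- The pairing `⟨n,p⟩ := (Σ_{k ≤ n+p} k) + p`. -/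
def pairN (n p : ℕ) : ℕ := tri (n + p) + p

/-- `Σ^t_k := Σ_{j<k} (t(j) + 2)`. -/
def sigT (t : List ℕ) (k : ℕ) : ℕ := ((t.take k).map (· + 2)).sum

/-- The set `K_t ⊆ 2^ω`: for each `k < |t|`, the vertical slices numbered
`Σ^t_k, …, Σ^t_k + t(k) + 1` are prescribed: the `i`-th of them is
`(w_{t(k)})_i · 0^∞`, except that the `0`-th one additionally carries a `1`
at position `t(k) + 1` (i.e. equals `(w_{t(k)})₀·0^{t(k)+1-|(w_{t(k)})₀|}·1·0^∞`). -/
def Kt (w : ℕ → List Bool) (t : List ℕ) : Set (ℕ → Bool) :=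
  {α | ∀ k < t.length, ∀ i < t.getD k 0 + 2, ∀ p,
    α (pairN (sigT t k + i) p) =
      if i = 0 ∧ p = t.getD k 0 + 1 then true
      else (w (t.getD k 0)).getD (pairN i p) false}

/-- The clopen piece `K^ε_t := {α ∈ K_t : α(⟨Σ^t_{|t|}, 0⟩) = ε}`. -/
def Keps (w : ℕ → List Bool) (t : List ℕ) (ε : Bool) : Set (ℕ → Bool) :=
  {α | α ∈ Kt w t ∧ α (pairN (sigT t t.length) 0) = ε}

/-- `M(q) := max {m : Σ_{k≤m} k ≤ q}`. -/
def Mq (q : ℕ) : ℕ := Nat.findGreatest (fun m => tri m ≤ q) q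

/-- The second inverse-pairing coordinate: `(q)₁ := q − Σ_{k≤M(q)} k`. -/
def unpair1 (q : ℕ) : ℕ := q - tri (Mq q)

/-- The first inverse-pairing coordinate: `(q)₀ := M(q) − (q)₁`. -/
def unpair0 (q : ℕ) : ℕ := Mq q - unpair1 q

/-- The basic clopen set `N_u := {α : u ⊆ α}`. -/
def Nu (u : List Bool) : Set (ℕ → Bool) := {α | ∀ k < u.length, α k = u.getD k false}

/-- `u` is placed with witness `t`: `N_u ∩ K_t ≠ ∅`, `(|u|−1)₀ = Σ^t_{|t|}`, and
`u(|u|−1) = 1` whenever `(|u|−1)₁ > 0`. -/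
def PlacedWit (w : ℕ → List Bool) (u : List Bool) (t : List ℕ) : Prop :=
  (Nu u ∩ Kt w t).Nonempty ∧ unpair0 (u.length - 1) = sigT t t.length ∧
  (0 < unpair1 (u.length - 1) → u.getD (u.length - 1) false = true)

/-- `u` is placed: `u ≠ ∅` and it has some witness. -/
def Placed (w : ℕ → List Bool) (u : List Bool) : Prop :=
  u ≠ [] ∧ ∃ t : List ℕ, PlacedWit w u t

/-- The initial segment `α|p` as a finite sequence. -/
def restr (α : ℕ → Bool) (p : ℕ) : List Bool := List.ofFn fun i : Fin p => α i

/-! The pairing enumerates ℕ × ℕ diagonal by diagonal, so it is ordered lexicographically by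
`(n + p, p)`. Between the marker `⟨Σ^t_k, t(k)+1⟩` and `⟨Σ^t_{k+1}, 0⟩` the enumeration only
runs through the diagonal `n + p = Σ^t_k + t(k) + 1` at slices `n < Σ^t_k`, i.e. through slices
of earlier blocks `k' < k` at heights where the word `w_{t(k')}` has already ended, so `K_t`
forces `0` there. As `⟨Σ^t_{|t|}, 0⟩ < |u|`, the word `u` sees every marker. Two witnesses
agreeing below `k` have their `k`-th markers on the same slice, and the higher one lies where the
other witness forces a `0`; hence one witness is a prefix of the other, and they coincide because
`Σ^t_{|t|} = (|u|-1)₀` for both. -/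

lemma tri_succ (m : ℕ) : tri (m + 1) = tri m + (m + 1) := by
  show (m + 1) * (m + 1 + 1) / 2 = m * (m + 1) / 2 + (m + 1)
  rw [show (m + 1) * (m + 1 + 1) = m * (m + 1) + (m + 1) * 2 by ring,
    Nat.add_mul_div_right _ _ two_pos]

lemma tri_strictMono : StrictMono tri :=
  strictMono_nat_of_lt_succ fun m => by rw [tri_succ]; omega

lemma self_le_tri (m : ℕ) : m ≤ tri m :=
  tri_strictMono.le_apply

lemma pairN_lt_tri_succ (n p : ℕ) : pairN n p < tri (n + p + 1) := by
  rw [tri_succ]; unfold pairN; omega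

lemma pairN_lt_pairN_iff {n p n' p' : ℕ} :
    pairN n p < pairN n' p' ↔ n + p < n' + p' ∨ n + p = n' + p' ∧ p < p' := by
  have hlt {s s' : ℕ} (h : s < s') : tri (s + 1) ≤ tri s' := tri_strictMono.monotone h
  constructor
  · intro h
    by_contra! hge
    rcases (hge.1).lt_or_eq with hs | hs
    · have := hlt hs; have := pairN_lt_tri_succ n' p'; unfold pairN at *; omega
    · unfold pairN at h; rw [hs] at h; omega
  · rintro (hs | ⟨hs, hp⟩)
    · have := hlt hs; have := pairN_lt_tri_succ n p; unfold pairN at *; omega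
    · unfold pairN; rw [hs]; omega

lemma tri_Mq_le (q : ℕ) : tri (Mq q) ≤ q :=
  Nat.findGreatest_spec (P := fun m => tri m ≤ q) (Nat.zero_le q) (by simp [tri])

lemma lt_tri_Mq_succ (q : ℕ) : q < tri (Mq q + 1) := by
  by_contra! h
  exact Nat.findGreatest_is_greatest (Nat.lt_succ_self _) ((self_le_tri _).trans h) h

lemma pairN_unpair (q : ℕ) : pairN (unpair0 q) (unpair1 q) = q := by
  have h₁ := tri_Mq_le q
  have h₂ := lt_tri_Mq_succ q
  rw [tri_succ] at h₂
  unfold pairN unpair0 unpair1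
  rw [Nat.sub_add_cancel (by omega)]
  omega

section sigT

variable (t : List ℕ)

lemma sigT_succ {k : ℕ} (hk : k < t.length) :
    sigT t (k + 1) = sigT t k + (t.getD k 0 + 2) := by
  rw [sigT, List.take_succ_eq_append_getElem hk, List.map_append, List.sum_append,
    List.getD_eq_getElem t 0 hk]
  rfl

lemma sigT_mono : Monotone (sigT t) := by
  refine monotone_nat_of_le_succ fun k => ?_
  rcases lt_or_ge k t.length with hk | hk
  · rw [sigT_succ t hk]; omega
  · rw [sigT, sigT, List.take_of_length_le hk, List.take_of_length_le (by omega)]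

lemma exists_eq_sigT_add_of_lt_sigT {K : ℕ} (hK : K ≤ t.length) {n : ℕ}
    (hn : n < sigT t K) : ∃ k < K, ∃ i < t.getD k 0 + 2, n = sigT t k + i := by
  induction K with
  | zero => simp [sigT] at hn
  | succ K ih =>
    rcases lt_or_ge n (sigT t K) with h | h
    · obtain ⟨k, hk, i, hi, rfl⟩ := ih (by omega) h
      exact ⟨k, by omega, i, hi, rfl⟩
    · rw [sigT_succ t (by omega)] at hn
      exact ⟨K, K.lt_succ_self, n - sigT t K, by omega, by omega⟩

lemma pairN_marker_lt {k : ℕ} (hk : k < t.length) :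
    pairN (sigT t k) (t.getD k 0 + 1) < pairN (sigT t (k + 1)) 0 := by
  rw [sigT_succ t hk, pairN_lt_pairN_iff]; omega

variable {t}

lemma eq_of_prefix_of_sigT_length_eq {t' : List ℕ} (h : t <+: t')
    (hs : sigT t t.length = sigT t' t'.length) : t = t' := by
  have hsum (l : List ℕ) : sigT l l.length = (l.map (· + 2)).sum :=
    by rw [sigT, List.take_length]
  obtain ⟨s, rfl⟩ := h
  rw [hsum, hsum] at hs
  cases s with
  | nil => simp
  | cons a s => simp at hs

end sigT

section Kt

variable {w : ℕ → List Bool} {t : List ℕ} {α : ℕ → Bool} {k : ℕ}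

lemma apply_marker_of_mem_Kt (hα : α ∈ Kt w t) (hk : k < t.length) :
    α (pairN (sigT t k) (t.getD k 0 + 1)) = true := by
  simpa using hα k hk 0 (by omega) (t.getD k 0 + 1)

/-- The entry at `⟨i, p⟩` of `w_{t(k)}` lies beyond its length `t(k) + 1`, as `⟨i, p⟩ ≥ i + p`. -/
lemma apply_eq_false_of_mem_Kt (hw : ∀ n, (w n).length = n + 1) (hα : α ∈ Kt w t)
    (hk : k < t.length) {i p : ℕ} (hi : i < t.getD k 0 + 2) (hp : t.getD k 0 + 1 < i + p) :
    α (pairN (sigT t k + i) p) = false := by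
  rw [hα k hk i hi p, if_neg (by omega)]
  apply List.getD_eq_default
  have := self_le_tri (i + p)
  rw [hw]; unfold pairN; omega

lemma apply_eq_false_of_mem_Kt_of_between (hw : ∀ n, (w n).length = n + 1)
    (hα : α ∈ Kt w t) (hk : k < t.length) {m : ℕ}
    (h₁ : pairN (sigT t k) (t.getD k 0 + 1) < m) (h₂ : m < pairN (sigT t (k + 1)) 0) :
    α m = false := by
  rw [← pairN_unpair m] at h₁ h₂ ⊢
  generalize unpair0 m = n, unpair1 m = p at h₁ h₂ ⊢
  rw [sigT_succ t hk, pairN_lt_pairN_iff] at h₂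
  rw [pairN_lt_pairN_iff] at h₁
  obtain ⟨k', hk', i, hi, rfl⟩ := exists_eq_sigT_add_of_lt_sigT t hk.le (n := n) (by omega)
  have hblock := sigT_mono t (show k' + 1 ≤ k by omega)
  rw [sigT_succ t (by omega)] at hblock
  exact apply_eq_false_of_mem_Kt hw hα (by omega) hi (by omega)

end Kt

namespace PlacedWit

variable {w : ℕ → List Bool} {u : List Bool} {t t' : List ℕ}

lemma pairN_sigT_lt_length (hu : u ≠ []) (h : PlacedWit w u t) {k : ℕ} (hk : k ≤ t.length) :
    pairN (sigT t k) 0 < u.length := by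
  have hlast := pairN_unpair (u.length - 1)
  rw [h.2.1] at hlast
  have := tri_strictMono.monotone ((sigT_mono t hk).trans (Nat.le_add_right _ (unpair1 (u.length - 1))))
  have := List.length_pos_iff.mpr hu
  simp only [pairN, add_zero] at *
  omega

lemma getD_le_getD (hw : ∀ n, (w n).length = n + 1) (hu : u ≠ []) (h : PlacedWit w u t)
    (h' : PlacedWit w u t') {k : ℕ} (hk : k < t.length) (hk' : k < t'.length)
    (hs : sigT t k = sigT t' k) : t'.getD k 0 ≤ t.getD k 0 := by
  by_contra! hlt
  obtain ⟨α, hαu, hα⟩ := h.1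
  obtain ⟨α', hα'u, hα'⟩ := h'.1
  have hq := (pairN_marker_lt t' hk').trans (h'.pairN_sigT_lt_length hu hk')
  have hfalse := apply_eq_false_of_mem_Kt hw hα hk (i := 0) (p := t'.getD k 0 + 1)
    (by omega) (by omega)
  rw [add_zero, hs, hαu _ hq] at hfalse
  rw [← hα'u _ hq, apply_marker_of_mem_Kt hα' hk'] at hfalse
  exact Bool.noConfusion hfalse

lemma take_eq_take (hw : ∀ n, (w n).length = n + 1) (hu : u ≠ []) (h : PlacedWit w u t)
    (h' : PlacedWit w u t') {k : ℕ} (hk : k ≤ t.length) (hk' : k ≤ t'.length) :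
    t.take k = t'.take k := by
  induction k with
  | zero => simp
  | succ k ih =>
    have htake := ih (by omega) (by omega)
    have hs : sigT t k = sigT t' k := by rw [sigT, sigT, htake]
    have hget : t.getD k 0 = t'.getD k 0 :=
      le_antisymm (h'.getD_le_getD hw hu h (by omega) (by omega) hs.symm)
        (h.getD_le_getD hw hu h' (by omega) (by omega) hs)
    rw [List.getD_eq_getElem _ _ (by omega), List.getD_eq_getElem _ _ (by omega)] at hget
    rw [List.take_succ_eq_append_getElem (by omega), List.take_succ_eq_append_getElem (by omega),
      htake, hget]

lemma unique (hw : ∀ n, (w n).length = n + 1) (hu : u ≠ []) (h : PlacedWit w u t)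
    (h' : PlacedWit w u t') : t = t' := by
  have hs : sigT t t.length = sigT t' t'.length := h.2.1.symm.trans h'.2.1
  rcases le_total t.length t'.length with hl | hl
  · have htake := h.take_eq_take hw hu h' le_rfl hl
    rw [List.take_length] at htake
    exact eq_of_prefix_of_sigT_length_eq (htake ▸ List.take_prefix _ _) hs
  · have htake := h'.take_eq_take hw hu h le_rfl hl
    rw [List.take_length] at htake
    exact (eq_of_prefix_of_sigT_length_eq (htake ▸ List.take_prefix _ _) hs.symm).symm

end PlacedWit

/-- if `u` is placed with witness `t`, then `Σ_t < |u|`, for each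
`k < |t|` the last `1` in `u` strictly before position `⟨Σ^t_{k+1}, 0⟩` is at
position `⟨Σ^t_k, t(k)+1⟩`, and the witness is unique. -/
theorem stmt17 (w : ℕ → List Bool) (hw : ∀ n, (w n).length = n + 1)
    (u : List Bool) (hu : u ≠ []) (t : List ℕ) (hwit : PlacedWit w u t) :
    pairN (sigT t t.length) 0 < u.length ∧
    (∀ k < t.length,
      u.getD (pairN (sigT t k) (t.getD k 0 + 1)) false = true ∧
      ∀ m, pairN (sigT t k) (t.getD k 0 + 1) < m → m < pairN (sigT t (k + 1)) 0 →
        u.getD m false = false) ∧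
    (∀ t' : List ℕ, PlacedWit w u t' → t' = t) := by
  obtain ⟨α, hαu, hα⟩ := hwit.1
  refine ⟨hwit.pairN_sigT_lt_length hu le_rfl, fun k hk => ?_,
    fun t' h' => h'.unique hw hu hwit⟩
  have hnext := hwit.pairN_sigT_lt_length hu (Nat.succ_le_of_lt hk)
  refine ⟨?_, fun m hm₁ hm₂ => ?_⟩
  · rw [← hαu _ ((pairN_marker_lt t hk).trans hnext)]
    exact apply_marker_of_mem_Kt hα hk
  · rw [← hαu m (hm₂.trans hnext)]
    exact apply_eq_false_of_mem_Kt_of_between hw hα hk hm₁ hm₂
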